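/- For a = (1/2 + δ/2)π with 0 < δ < 1 and b = λπ, λ ∈ ℝ, define M(λ) = z·(1−cos z̄)/sin z̄ with z = a + bi. Then Re M(λ) = (a sin a + b sinh b)/(cosh b + cos a), and there exists C ≥ 1 (depending on δ) such that (1/C)(1+|λ|) ≤ Re M(λ) ≤ C(1+|λ|) for all λ ∈ ℝ. -/

import Mathlib

open MeasureTheory Real Set Filter

/-- Hilbert transform on ℝ (principal value form). -/
noncomputable def hilbert (f : ℝ → ℝ) (x : ℝ) : ℝ :=
  (1 / Real.pi) * ∫ y in Set.Ioi (0:ℝ), (f (x - y) - f (x + y)) / y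

/-- Fractional Laplacian Λ^s = (−Δ)^{s/2}, the Fourier multiplier |ξ|^s. -/
noncomputable def lam (s : ℝ) (f : ℝ → ℝ) (x : ℝ) : ℝ :=
  (FourierTransformInv.fourierInv
    (fun ξ : ℝ => ((|ξ| ^ s : ℝ) : ℂ) * FourierTransform.fourier (fun y : ℝ => (f y : ℂ)) ξ) x).re

/-!
Writing `z̄ = x + y i`, the half-angle formula
`(1 - cos z̄) / sin z̄ = tan (z̄ / 2) = (sin x + i sinh y) / (cos x + cosh y)` has a real
denominator, so the real part of `z (1 - cos z̄) / sin z̄` is read off directly. For the bounds, the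
numerator `a sin a + b sinh b` is comparable to `(1 + |b|) cosh b` because `a sin a > 0`,
`cosh b - 1 ≤ b sinh b` and `|b| (cosh b - sinh |b|) = |b| e^{-|b|} ≤ 1`, while the denominator
`cosh b + cos a` is comparable to `cosh b` because `cos a > -1`; finally `b = λπ` with `π ≥ 1`.
-/

open ComplexConjugate

namespace Complex

theorem sin_add_mul_I_ofReal (x y : ℝ) :
    sin (x + y * I) = ↑(Real.sin x * Real.cosh y) + ↑(Real.cos x * Real.sinh y) * I := by
  rw [sin_add_mul_I]; push_cast; rfl

theorem cos_add_mul_I_ofReal (x y : ℝ) :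
    cos (x + y * I) = ↑(Real.cos x * Real.cosh y) - ↑(Real.sin x * Real.sinh y) * I := by
  rw [cos_add_mul_I]; push_cast; rfl

theorem sin_add_mul_I_eq_zero_iff (x y : ℝ) :
    sin (x + y * I) = 0 ↔ Real.sin x = 0 ∧ Real.sinh y = 0 := by
  rw [sin_add_mul_I_ofReal, Complex.ext_iff]
  simp only [add_re, add_im, ofReal_re, ofReal_im, mul_re, mul_im, I_re, I_im, zero_re, zero_im,
    mul_zero, mul_one, sub_zero, add_zero, zero_add, mul_eq_zero,
    (Real.cosh_pos y).ne', or_false]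
  constructor
  · rintro ⟨hsin, hcos | hsinh⟩
    · nlinarith [Real.sin_sq_add_cos_sq x]
    · exact ⟨hsin, hsinh⟩
  · rintro ⟨hsin, hsinh⟩
    exact ⟨hsin, Or.inr hsinh⟩

-- `tan (w / 2)` in real coordinates; no side condition is needed, since both sides vanish
-- exactly when `sin w = 0` (and the right-hand denominator vanishes only then).
theorem one_sub_cos_div_sin_add_mul_I (x y : ℝ) :
    (1 - cos (x + y * I)) / sin (x + y * I) =
      (Real.sin x + Real.sinh y * I) / (Real.cos x + Real.cosh y : ℝ) := by
  by_cases hsin : sin (x + y * I) = 0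
  · obtain ⟨hx, hy⟩ := (sin_add_mul_I_eq_zero_iff x y).1 hsin
    simp [hsin, hx, hy]
  have hD : Real.cos x + Real.cosh y ≠ 0 := by
    intro hD
    refine hsin ((sin_add_mul_I_eq_zero_iff x y).2 ?_)
    have : Real.sin x ^ 2 + Real.sinh y ^ 2 = 0 := by
      linear_combination (Real.cosh y - Real.cos x) * hD + Real.sin_sq_add_cos_sq x
        - Real.cosh_sq_sub_sinh_sq y
    constructor <;> nlinarith [sq_nonneg (Real.sin x), sq_nonneg (Real.sinh y)]
  rw [div_eq_div_iff hsin (ofReal_ne_zero.2 hD), cos_add_mul_I_ofReal, sin_add_mul_I_ofReal]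
  push_cast
  linear_combination -cos (x : ℂ) * cosh_sq_sub_sinh_sq (y : ℂ)
    - cosh (y : ℂ) * sin_sq_add_cos_sq (x : ℂ) - cos (x : ℂ) * sinh (y : ℂ) ^ 2 * I_sq

theorem re_mul_one_sub_cos_conj_div_sin_conj (a b : ℝ) :
    let z : ℂ := a + b * I
    (z * (1 - cos (conj z)) / sin (conj z)).re =
      (a * Real.sin a + b * Real.sinh b) / (Real.cosh b + Real.cos a) := by
  intro z
  have hconj : conj z = a + (-b : ℝ) * I := by simp [z]
  rw [hconj, mul_div_assoc, one_sub_cos_div_sin_add_mul_I, ← mul_div_assoc, div_ofReal_re,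
    Real.sinh_neg, Real.cosh_neg, add_comm (Real.cos a)]
  simp [z, sin_ofReal_re, sinh_ofReal_re]

end Complex

namespace Real

theorem abs_mul_sinh_abs (x : ℝ) : |x| * sinh |x| = x * sinh x := by
  rcases abs_cases x with ⟨h, _⟩ | ⟨h, _⟩ <;> rw [h]
  rw [sinh_neg, neg_mul_neg]

-- In exponentials this is `(1 + x) e^{-x} ≤ 1 ≤ (x - 1) e^x + 2`, i.e. `1 + t ≤ e^t` at `t = ±x`.
theorem cosh_sub_one_le_mul_sinh (x : ℝ) : cosh x - 1 ≤ x * sinh x := by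
  have hexp : exp x * exp (-x) = 1 := by rw [← exp_add, add_neg_cancel, exp_zero]
  have h₁ := mul_nonneg (sub_nonneg.2 (add_one_le_exp (-x))) (exp_pos x).le
  have h₂ := mul_nonneg (sub_nonneg.2 (add_one_le_exp x)) (exp_pos (-x)).le
  rw [cosh_eq, sinh_eq]
  nlinarith

theorem abs_mul_cosh_le (x : ℝ) : |x| * cosh x ≤ 1 + x * sinh x := by
  have hexp : exp |x| * exp (-|x|) = 1 := by rw [← exp_add, add_neg_cancel, exp_zero]
  have h := mul_le_mul_of_nonneg_right ((le_add_of_nonneg_right zero_le_one).trans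
    (add_one_le_exp |x|)) (exp_pos (-|x|)).le
  rw [← abs_mul_sinh_abs, ← cosh_abs, ← sub_le_iff_le_add, ← mul_sub, cosh_sub_sinh]
  linarith

theorem one_add_abs_mul_cosh_le (x : ℝ) : (1 + |x|) * cosh x ≤ 2 * (1 + x * sinh x) := by
  linarith [cosh_sub_one_le_mul_sinh x, abs_mul_cosh_le x]

theorem add_mul_sinh_le {s : ℝ} (hs : 0 ≤ s) (x : ℝ) :
    s + x * sinh x ≤ max s 1 * ((1 + |x|) * cosh x) := by
  have h₁ : s ≤ max s 1 * cosh x :=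
    (le_max_left s 1).trans (le_mul_of_one_le_right (hs.trans (le_max_left s 1)) (one_le_cosh x))
  have h₂ : x * sinh x ≤ max s 1 * (|x| * cosh x) := by
    rw [← abs_mul_sinh_abs, ← cosh_abs x]
    exact (mul_le_mul_of_nonneg_left (sinh_lt_cosh |x|).le (abs_nonneg x)).trans
      (le_mul_of_one_le_left (by positivity) (le_max_right s 1))
  linarith

end Real

def ComparableToOneAddAbs (f : ℝ → ℝ) : Prop :=
  ∃ C : ℝ, 1 ≤ C ∧ ∀ x, 1 / C * (1 + |x|) ≤ f x ∧ f x ≤ C * (1 + |x|)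

namespace ComparableToOneAddAbs

theorem of_bounds {f : ℝ → ℝ} {m M : ℝ} (hm : 0 < m)
    (h : ∀ x, m * (1 + |x|) ≤ f x ∧ f x ≤ M * (1 + |x|)) : ComparableToOneAddAbs f := by
  refine ⟨max (max M m⁻¹) 1, le_max_right _ _, fun x => ⟨?_, ?_⟩⟩
  · have hC : 1 / max (max M m⁻¹) 1 ≤ m := by
      rw [one_div_le (by positivity) hm, one_div]
      exact (le_max_right M m⁻¹).trans (le_max_left _ 1)
    exact (mul_le_mul_of_nonneg_right hC (by positivity)).trans (h x).1
  · exact (h x).2.trans (mul_le_mul_of_nonneg_right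
      ((le_max_left M m⁻¹).trans (le_max_left _ 1)) (by positivity))

theorem comp_mul_const {f : ℝ → ℝ} (hf : ComparableToOneAddAbs f) {r : ℝ} (hr : 1 ≤ r) :
    ComparableToOneAddAbs (fun x => f (x * r)) := by
  obtain ⟨C, hC, hfC⟩ := hf
  refine of_bounds (m := 1 / C) (M := C * r) (by positivity) fun x => ⟨?_, ?_⟩
  · have : |x| ≤ |x * r| := by
      rw [abs_mul, abs_of_pos (zero_lt_one.trans_le hr)]
      exact le_mul_of_one_le_right (abs_nonneg x) hr
    exact (mul_le_mul_of_nonneg_left (by linarith) (by positivity)).trans (hfC (x * r)).1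
  · have : 1 + |x * r| ≤ r * (1 + |x|) := by
      rw [abs_mul, abs_of_pos (zero_lt_one.trans_le hr)]
      linarith
    calc f (x * r) ≤ C * (1 + |x * r|) := (hfC (x * r)).2
      _ ≤ C * (r * (1 + |x|)) := mul_le_mul_of_nonneg_left this (by positivity)
      _ = C * r * (1 + |x|) := by ring

end ComparableToOneAddAbs

open Real in
theorem comparableToOneAddAbs_add_mul_sinh_div_cosh_add {s c : ℝ} (hs : 0 < s) (hc : -1 < c) :
    ComparableToOneAddAbs (fun x => (s + x * sinh x) / (cosh x + c)) := by
  have hκ : 0 < 1 + min c 0 := by linarith [lt_min hc neg_one_lt_zero]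
  refine .of_bounds (m := min s 1 / (2 * (1 + max c 0))) (M := max s 1 / (1 + min c 0))
    (by positivity) fun x => ?_
  have hcosh := one_le_cosh x
  have hden_lower : (1 + min c 0) * cosh x ≤ cosh x + c := by
    rcases min_cases c 0 with ⟨h, hc0⟩ | ⟨h, hc0⟩ <;> rw [h] <;> nlinarith
  have hden_upper : cosh x + c ≤ (1 + max c 0) * cosh x := by
    rcases max_cases c 0 with ⟨h, hc0⟩ | ⟨h, hc0⟩ <;> rw [h] <;> nlinarith
  have hden : 0 < cosh x + c := lt_of_lt_of_le (by positivity) hden_lower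
  have hxs : 0 ≤ x * sinh x := by rw [← abs_mul_sinh_abs]; positivity
  constructor
  · rw [le_div_iff₀ hden]
    have hnum : min s 1 * (1 + x * sinh x) ≤ s + x * sinh x := by
      nlinarith [min_le_left s 1, min_le_right s 1]
    calc min s 1 / (2 * (1 + max c 0)) * (1 + |x|) * (cosh x + c)
        ≤ min s 1 / (2 * (1 + max c 0)) * (1 + |x|) * ((1 + max c 0) * cosh x) := by
          gcongr
      _ = min s 1 / 2 * ((1 + |x|) * cosh x) := by field_simp
      _ ≤ min s 1 / 2 * (2 * (1 + x * sinh x)) :=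
          mul_le_mul_of_nonneg_left (one_add_abs_mul_cosh_le x) (by positivity)
      _ ≤ s + x * sinh x := by linarith
  · rw [div_le_iff₀ hden]
    calc s + x * sinh x ≤ max s 1 * ((1 + |x|) * cosh x) := add_mul_sinh_le hs.le x
      _ = max s 1 / (1 + min c 0) * (1 + |x|) * ((1 + min c 0) * cosh x) := by field_simp
      _ ≤ max s 1 / (1 + min c 0) * (1 + |x|) * (cosh x + c) := by gcongr

open Complex in
/-- Analysis of the multiplier `M(λ) = z (1−cos z̄)/sin z̄`, `z = a + bi`,
`a = (1/2+δ/2)π`, `b = λπ`: real-part formula and two-sided linear bounds. -/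
theorem stmt7 (δ : ℝ) (hδ0 : 0 < δ) (hδ1 : δ < 1) :
    (∀ lamb : ℝ,
      let a : ℝ := (1/2 + δ/2) * Real.pi
      let b : ℝ := lamb * Real.pi
      let z : ℂ := a + b * Complex.I
      ((z * (1 - Complex.cos ((starRingEnd ℂ) z)) / Complex.sin ((starRingEnd ℂ) z)).re =
        (a * Real.sin a + b * Real.sinh b) / (Real.cosh b + Real.cos a))) ∧
    ∃ C : ℝ, 1 ≤ C ∧ ∀ lamb : ℝ,
      let a : ℝ := (1/2 + δ/2) * Real.pi
      let b : ℝ := lamb * Real.pi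
      let z : ℂ := a + b * Complex.I
      (1 / C) * (1 + |lamb|) ≤
          (z * (1 - Complex.cos ((starRingEnd ℂ) z)) / Complex.sin ((starRingEnd ℂ) z)).re ∧
        (z * (1 - Complex.cos ((starRingEnd ℂ) z)) / Complex.sin ((starRingEnd ℂ) z)).re ≤
          C * (1 + |lamb|) := by
  set a : ℝ := (1/2 + δ/2) * Real.pi
  have ha_pos : 0 < a := by positivity
  have ha_lt_pi : a < π := (mul_lt_iff_lt_one_left pi_pos).2 (by linarith)
  have hs : 0 < a * Real.sin a := mul_pos ha_pos (sin_pos_of_pos_of_lt_pi ha_pos ha_lt_pi)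
  have hc : -1 < Real.cos a := by
    rw [← Real.cos_pi]; exact cos_lt_cos_of_nonneg_of_le_pi ha_pos.le le_rfl ha_lt_pi
  obtain ⟨C, hC, hbounds⟩ := (comparableToOneAddAbs_add_mul_sinh_div_cosh_add hs hc).comp_mul_const
    (by linarith [pi_gt_three] : 1 ≤ π)
  refine ⟨fun lamb => re_mul_one_sub_cos_conj_div_sin_conj a (lamb * π), C, hC, fun lamb => ?_⟩
  have hre := re_mul_one_sub_cos_conj_div_sin_conj a (lamb * π)
  simp only at hre ⊢
  rw [hre]
  exact hbounds lamb
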